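/- arXiv:1011.4613 — 4 statements merged into one kernel-verified Lean document; each statement's English description precedes it below -/
import Mathlib

section
/- If a real Banach space X admits a separating polynomial, then there exist an integer n ≥ 1, a constant A > 1, and a continuous 2n-homogeneous polynomial q : X → ℝ such that ‖x‖^{2n} ≤ q(x) ≤ A‖x‖^{2n} for all x ∈ X. -/
/-- A continuous polynomial: a finite sum of continuous homogeneous polynomials. -/
def IsContinuousPolynomial {X : Type*} [NormedAddCommGroup X] [NormedSpace ℝ X]
    (P : X → ℝ) : Prop :=
  ∃ n : ℕ, ∃ M : ∀ i : ℕ, ContinuousMultilinearMap ℝ (fun _ : Fin i => X) ℝ,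
    ∀ x : X, P x = ∑ i ∈ Finset.range (n + 1), (M i) (fun _ => x)

/-- `X` admits a separating polynomial: a continuous polynomial vanishing at `0`
whose infimum on the unit sphere is strictly positive. -/
def HasSeparatingPoly (X : Type*) [NormedAddCommGroup X] [NormedSpace ℝ X] : Prop :=
  ∃ P : X → ℝ, IsContinuousPolynomial P ∧ P 0 = 0 ∧
    ∃ c : ℝ, 0 < c ∧ ∀ x : X, ‖x‖ = 1 → c ≤ P x

/-!
Write the separating polynomial as `P = P₁ + ⋯ + Pₙ` with `Pᵢ` homogeneous of degree `i`, and
let `L = n!`. Then `q = ∑ᵢ Pᵢ ^ (2L / i)` is homogeneous of degree `2L` and a sum of even powers.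
On the unit sphere `∑ᵢ Pᵢ(x) ≥ c`, so some `Pᵢ(x)` is at least `c / (n + 1)` and `q` is bounded
below there by a positive constant `δ`; by homogeneity `q x ≥ δ ‖x‖ ^ (2L)`, and continuity of
the underlying multilinear map gives the upper bound.
-/

open Finset Nat

section Homogeneous

variable {X : Type*} [NormedAddCommGroup X] [NormedSpace ℝ X]

def IsContinuousHomogeneousPolynomial (k : ℕ) (q : X → ℝ) : Prop :=
  ∃ M : ContinuousMultilinearMap ℝ (fun _ : Fin k => X) ℝ, ∀ x, q x = M fun _ => x

namespace IsContinuousHomogeneousPolynomial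

theorem one : IsContinuousHomogeneousPolynomial 0 (1 : X → ℝ) :=
  ⟨ContinuousMultilinearMap.constOfIsEmpty ℝ _ 1, fun _ => rfl⟩

theorem add {k : ℕ} {p q : X → ℝ} (hp : IsContinuousHomogeneousPolynomial k p)
    (hq : IsContinuousHomogeneousPolynomial k q) :
    IsContinuousHomogeneousPolynomial k (p + q) := by
  obtain ⟨f, hf⟩ := hp
  obtain ⟨g, hg⟩ := hq
  exact ⟨f + g, fun x => by simp [hf, hg]⟩

theorem const_smul {k : ℕ} {q : X → ℝ} (hq : IsContinuousHomogeneousPolynomial k q) (c : ℝ) :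
    IsContinuousHomogeneousPolynomial k (c • q) := by
  obtain ⟨f, hf⟩ := hq
  exact ⟨c • f, fun x => by simp [hf]⟩

theorem sum {ι : Type*} {k : ℕ} {s : Finset ι} {p : ι → X → ℝ}
    (hp : ∀ i ∈ s, IsContinuousHomogeneousPolynomial k (p i)) :
    IsContinuousHomogeneousPolynomial k (fun x => ∑ i ∈ s, p i x) := by
  have hzero : IsContinuousHomogeneousPolynomial k (0 : X → ℝ) := ⟨0, fun _ => rfl⟩
  have := Finset.sum_induction p (IsContinuousHomogeneousPolynomial k) (fun _ _ => add) hzero hp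
  simpa only [Finset.sum_fn] using this

theorem mul {a b : ℕ} {p q : X → ℝ} (hp : IsContinuousHomogeneousPolynomial a p)
    (hq : IsContinuousHomogeneousPolynomial b q) :
    IsContinuousHomogeneousPolynomial (a + b) (p * q) := by
  obtain ⟨f, hf⟩ := hp
  obtain ⟨g, hg⟩ := hq
  exact ⟨(f.smulRight g).uncurrySum.domDomCongr finSumFinEquiv,
    fun x => by simp [hf, hg, Function.comp_def]⟩

theorem pow {k : ℕ} {q : X → ℝ} (hq : IsContinuousHomogeneousPolynomial k q) :
    ∀ m : ℕ, IsContinuousHomogeneousPolynomial (k * m) (q ^ m)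
  | 0 => by simpa using one
  | m + 1 => by simpa only [Nat.mul_succ, pow_succ] using (hq.pow m).mul hq

theorem map_smul {k : ℕ} {q : X → ℝ} (hq : IsContinuousHomogeneousPolynomial k q)
    (t : ℝ) (x : X) : q (t • x) = t ^ k * q x := by
  obtain ⟨f, hf⟩ := hq
  simpa [hf] using f.map_smul_univ (fun _ => t) (fun _ => x)

theorem exists_abs_le_mul_norm_pow {k : ℕ} {q : X → ℝ} (hq : IsContinuousHomogeneousPolynomial k q) :
    ∃ C, ∀ x, |q x| ≤ C * ‖x‖ ^ k := by
  obtain ⟨f, hf⟩ := hq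
  exact ⟨‖f‖, fun x => by simpa [hf] using f.le_opNorm fun _ => x⟩

theorem mul_norm_pow_le_of_forall_sphere {k : ℕ} {q : X → ℝ}
    (hq : IsContinuousHomogeneousPolynomial k q) (hk : 0 < k) {a : ℝ}
    (ha : ∀ x : X, ‖x‖ = 1 → a ≤ q x) (x : X) : a * ‖x‖ ^ k ≤ q x := by
  rcases eq_or_ne x 0 with rfl | hx
  · have : q 0 = 0 := by simpa [zero_pow hk.ne'] using hq.map_smul 0 0
    simp [this, zero_pow hk.ne']
  · have hnorm : ‖x‖ ≠ 0 := norm_ne_zero_iff.mpr hx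
    have hunit : ‖‖x‖⁻¹ • x‖ = 1 := by simp [norm_smul, hnorm]
    calc a * ‖x‖ ^ k ≤ q (‖x‖⁻¹ • x) * ‖x‖ ^ k := by gcongr; exact ha _ hunit
      _ = q x := by rw [hq.map_smul, mul_comm, ← mul_assoc, ← mul_pow, mul_inv_cancel₀ hnorm,
          one_pow, one_mul]

theorem exists_norm_pow_le_and_le {k : ℕ} {q : X → ℝ}
    (hq : IsContinuousHomogeneousPolynomial k q) (hk : 0 < k) {a : ℝ} (ha0 : 0 < a)
    (ha : ∀ x : X, ‖x‖ = 1 → a ≤ q x) :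
    ∃ A : ℝ, 1 < A ∧ ∃ q' : X → ℝ, IsContinuousHomogeneousPolynomial k q' ∧
      ∀ x, ‖x‖ ^ k ≤ q' x ∧ q' x ≤ A * ‖x‖ ^ k := by
  have hq' := hq.const_smul a⁻¹
  obtain ⟨C, hC⟩ := hq'.exists_abs_le_mul_norm_pow
  refine ⟨max C 2, by simp, _, hq', fun x => ⟨?_, ?_⟩⟩
  · have hax := hq.mul_norm_pow_le_of_forall_sphere hk ha x
    simp only [Pi.smul_apply, smul_eq_mul]
    rwa [le_inv_mul_iff₀ ha0]
  · calc (a⁻¹ • q) x ≤ C * ‖x‖ ^ k := (le_abs_self _).trans (hC x)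
      _ ≤ max C 2 * ‖x‖ ^ k := by gcongr; exact le_max_left _ _

end IsContinuousHomogeneousPolynomial

end Homogeneous

theorem Finset.exists_div_le_of_le_sum {ι : Type*} {s : Finset ι} {f : ι → ℝ} {c : ℝ} {N : ℕ}
    (hc : 0 < c) (hN : #s ≤ N) (h : c ≤ ∑ i ∈ s, f i) : ∃ i ∈ s, c / N ≤ f i := by
  have hs : s.Nonempty := by
    by_contra hs
    rw [Finset.not_nonempty_iff_eq_empty.mp hs, Finset.sum_empty] at h
    exact h.not_gt hc
  have hN0 : (0 : ℝ) < N := by exact_mod_cast hs.card_pos.trans_le hN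
  refine Finset.exists_le_of_sum_le hs (le_trans ?_ h)
  calc ∑ _i ∈ s, c / N = #s * (c / N) := by rw [sum_const, nsmul_eq_mul]
    _ ≤ N * (c / N) := by gcongr
    _ = c := mul_div_cancel₀ _ hN0.ne'

theorem pow_le_sum_pow_two_mul {ι : Type*} {s : Finset ι} {f : ι → ℝ} {e : ι → ℕ} {E : ℕ}
    {m : ℝ} (hm0 : 0 ≤ m) (hm1 : m ≤ 1) (he : ∀ i ∈ s, e i ≤ E) {i : ι} (hi : i ∈ s)
    (hfi : m ≤ f i) : m ^ (2 * E) ≤ ∑ j ∈ s, f j ^ (2 * e j) :=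
  calc m ^ (2 * E) ≤ m ^ (2 * e i) := pow_le_pow_of_le_one hm0 hm1 (by have := he i hi; omega)
    _ ≤ f i ^ (2 * e i) := pow_le_pow_left₀ hm0 hfi _
    _ ≤ ∑ j ∈ s, f j ^ (2 * e j) :=
      Finset.single_le_sum (fun j _ => (even_two_mul (e j)).pow_nonneg (f j)) hi

section Separating

variable {X : Type*} [NormedAddCommGroup X] [NormedSpace ℝ X]

theorem IsContinuousPolynomial.exists_eq_sum_homogeneous {P : X → ℝ}
    (hP : IsContinuousPolynomial P) (hP0 : P 0 = 0) :
    ∃ n : ℕ, ∃ p : ℕ → X → ℝ, (∀ i, IsContinuousHomogeneousPolynomial (i + 1) (p i)) ∧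
      ∀ x, P x = ∑ i ∈ range n, p i x := by
  obtain ⟨n, M, hM⟩ := hP
  refine ⟨n, fun i x => M (i + 1) fun _ => x, fun i => ⟨M (i + 1), fun _ => rfl⟩, fun x => ?_⟩
  have hconst : (M 0 fun _ => x) = P 0 := by
    have hvanish : ∀ k, (M (k + 1) fun _ => (0 : X)) = 0 := fun k => (M (k + 1)).map_zero
    rw [hM, sum_range_succ', sum_eq_zero fun k _ => hvanish k, zero_add]
    exact congrArg (M 0) (Subsingleton.elim _ _)
  rw [hM, sum_range_succ', hconst, hP0, add_zero]

theorem isContinuousHomogeneousPolynomial_sum_pow_factorial {n : ℕ} {p : ℕ → X → ℝ}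
    (hp : ∀ i, IsContinuousHomogeneousPolynomial (i + 1) (p i)) :
    IsContinuousHomogeneousPolynomial (2 * n !)
      (fun x => ∑ i ∈ range n, p i x ^ (2 * (n ! / (i + 1)))) := by
  refine IsContinuousHomogeneousPolynomial.sum fun i hi => ?_
  have hdeg : (i + 1) * (2 * (n ! / (i + 1))) = 2 * n ! := by
    rw [mul_left_comm, Nat.mul_div_cancel' (dvd_factorial i.succ_pos (mem_range.mp hi))]
  exact hdeg ▸ (hp i).pow _

end Separating

theorem exists_homogeneous_separating_poly_general
    {X : Type*} [NormedAddCommGroup X] [NormedSpace ℝ X]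
    (hsep : HasSeparatingPoly X) :
    ∃ n : ℕ, 1 ≤ n ∧ ∃ A : ℝ, 1 < A ∧ ∃ q : X → ℝ,
      (∃ M : ContinuousMultilinearMap ℝ (fun _ : Fin (2 * n) => X) ℝ,
        ∀ x : X, q x = M (fun _ => x)) ∧
      ∀ x : X, ‖x‖ ^ (2 * n) ≤ q x ∧ q x ≤ A * ‖x‖ ^ (2 * n) := by
  obtain ⟨P, hP, hP0, c, hc, hPc⟩ := hsep
  obtain ⟨n, p, hp, hPp⟩ := hP.exists_eq_sum_homogeneous hP0
  set m := min (c / (n + 1 : ℕ)) 1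
  have hm : 0 < m := lt_min (div_pos hc (by positivity)) one_pos
  have hq_sphere : ∀ x : X, ‖x‖ = 1 →
      m ^ (2 * n !) ≤ ∑ i ∈ range n, p i x ^ (2 * (n ! / (i + 1))) := by
    intro x hx
    obtain ⟨i, hi, hci⟩ :=
      exists_div_le_of_le_sum (N := n + 1) hc (by simp) ((hPc x hx).trans (hPp x).le)
    exact pow_le_sum_pow_two_mul hm.le (min_le_right _ _) (fun j _ => Nat.div_le_self _ _) hi
      ((min_le_left _ _).trans hci)
  obtain ⟨A, hA, q, hq, hbounds⟩ :=
    (isContinuousHomogeneousPolynomial_sum_pow_factorial hp).exists_norm_pow_le_and_le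
      (by positivity) (by positivity) hq_sphere
  exact ⟨n !, factorial_pos n, A, hA, q, hq, hbounds⟩

/-- If a real Banach space admits a separating polynomial, then it admits a continuous
`2n`-homogeneous polynomial `q` with `‖x‖^(2n) ≤ q x ≤ A‖x‖^(2n)` for some `A > 1`. -/
theorem exists_homogeneous_separating_poly
    {X : Type*} [NormedAddCommGroup X] [NormedSpace ℝ X] [CompleteSpace X]
    (hsep : HasSeparatingPoly X) :
    ∃ n : ℕ, 1 ≤ n ∧ ∃ A : ℝ, 1 < A ∧ ∃ q : X → ℝ,
      (∃ M : ContinuousMultilinearMap ℝ (fun _ : Fin (2 * n) => X) ℝ,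
        ∀ x : X, q x = M (fun _ => x)) ∧
      ∀ x : X, ‖x‖ ^ (2 * n) ≤ q x ∧ q x ≤ A * ‖x‖ ^ (2 * n) :=
  exists_homogeneous_separating_poly_general hsep
end

section
/- Let n ≥ 1, A > 1, and let q : X → ℝ be a continuous 2n-homogeneous polynomial on a real Banach space X with ‖x‖^{2n} ≤ q(x) ≤ A‖x‖^{2n} for all x ∈ X. Then the function Q(x) = (q(x)+1)^{1/(2n)} − 1 is real-analytic on X. -/
/-- A function `g : X → ℝ` is real-analytic if around every point it is given by a
convergent sum of continuous homogeneous polynomials. -/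
def IsRealAnalytic {X : Type*} [NormedAddCommGroup X] [NormedSpace ℝ X] (g : X → ℝ) : Prop :=
  ∀ x : X, ∃ N ∈ nhds x,
    ∃ P : ∀ k : ℕ, ContinuousMultilinearMap ℝ (fun _ : Fin k => X) ℝ,
      ∀ h : X, x + h ∈ N → HasSum (fun k => (P k) (fun _ => h)) (g (x + h))

/-! Because `q x ≥ ‖x‖^(2n) ≥ 0`, the base `q x + 1` stays in `(0, ∞)`, where
`t ↦ t ^ c = exp (c log t)` is analytic. So `Q` is an analytic function of the polynomial `q`,
and the local power series of an analytic function are exactly the required expansions. -/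

section

variable {X : Type*} [NormedAddCommGroup X] [NormedSpace ℝ X]

theorem IsRealAnalytic.of_analyticAt {g : X → ℝ} (hg : ∀ x, AnalyticAt ℝ g x) :
    IsRealAnalytic g := by
  intro x
  obtain ⟨p, hp⟩ := hg x
  exact ⟨_, hp.eventually_hasSum_sub, p, fun h hh => by simpa using hh⟩

theorem AnalyticAt.rpow_const {f : X → ℝ} {x : X} (hf : AnalyticAt ℝ f x) (hpos : 0 < f x)
    (c : ℝ) : AnalyticAt ℝ (fun y => f y ^ c) x := by
  refine (((analyticAt_log hpos).comp hf).mul (analyticAt_const (v := c))).rexp'.congr ?_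
  filter_upwards [hf.continuousAt.eventually (lt_mem_nhds hpos)] with y hy
  rw [Real.rpow_def_of_pos hy]
  rfl

theorem ContinuousMultilinearMap.analyticAt_diag {ι F : Type*} [Fintype ι]
    [NormedAddCommGroup F] [NormedSpace ℝ F] (M : ContinuousMultilinearMap ℝ (fun _ : ι => X) F) (x : X) :
    AnalyticAt ℝ (fun y => M fun _ => y) x :=
  M.analyticAt.comp (AnalyticAt.pi fun _ => analyticAt_id)

end

theorem Q_isRealAnalytic_general
    {X : Type*} [NormedAddCommGroup X] [NormedSpace ℝ X]
    (n : ℕ) (A : ℝ)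
    (q : X → ℝ)
    (M : ContinuousMultilinearMap ℝ (fun _ : Fin (2 * n) => X) ℝ)
    (hq : ∀ x : X, q x = M (fun _ => x))
    (hbound : ∀ x : X, ‖x‖ ^ (2 * n) ≤ q x ∧ q x ≤ A * ‖x‖ ^ (2 * n)) :
    IsRealAnalytic (fun x : X => (q x + 1) ^ ((1 : ℝ) / (2 * n)) - 1) := by
  have hq_analytic : ∀ x, AnalyticAt ℝ q x := fun x => by
    simpa only [← funext hq] using M.analyticAt_diag x
  have hbase_pos : ∀ x, 0 < q x + 1 := fun x => by
    linarith [(hbound x).1, pow_nonneg (norm_nonneg x) (2 * n)]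
  refine IsRealAnalytic.of_analyticAt fun x => ?_
  exact (((hq_analytic x).add analyticAt_const).rpow_const (hbase_pos x) _).sub analyticAt_const

/-- If `q` is a continuous `2n`-homogeneous polynomial with
`‖x‖^(2n) ≤ q x ≤ A‖x‖^(2n)`, then `Q x = (q x + 1)^(1/(2n)) - 1` is real-analytic. -/
theorem Q_isRealAnalytic
    {X : Type*} [NormedAddCommGroup X] [NormedSpace ℝ X] [CompleteSpace X]
    (n : ℕ) (hn : 1 ≤ n) (A : ℝ) (hA : 1 < A)
    (q : X → ℝ)
    (M : ContinuousMultilinearMap ℝ (fun _ : Fin (2 * n) => X) ℝ)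
    (hq : ∀ x : X, q x = M (fun _ => x))
    (hbound : ∀ x : X, ‖x‖ ^ (2 * n) ≤ q x ∧ q x ≤ A * ‖x‖ ^ (2 * n)) :
    IsRealAnalytic (fun x : X => (q x + 1) ^ ((1 : ℝ) / (2 * n)) - 1) :=
  Q_isRealAnalytic_general n A q M hq hbound
end

section
/- Let n ≥ 1, A > 1, and let q : X → ℝ be a continuous 2n-homogeneous polynomial on a real Banach space X with ‖x‖^{2n} ≤ q(x) ≤ A‖x‖^{2n} for all x ∈ X. Then the function Q(x) = (q(x)+1)^{1/(2n)} − 1 is Lipschitz on X, i.e. there is a constant L > 0 with |Q(x) − Q(y)| ≤ L‖x − y‖ for all x, y ∈ X. -/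
/-! The polynomial `q` is locally Lipschitz with `|q x - q y| ≤ 2n ‖M‖ r^(2n-1) ‖x - y‖`, where
`r = max ‖x‖ ‖y‖`. Taking the `2n`-th root of `q + 1 ≥ r^(2n) + 1` divides differences by at
least `(r^(2n) + 1)^(1 - 1/(2n)) ≥ r^(2n-1)`, which exactly cancels the growth of the local
Lipschitz constant. -/

theorem ContinuousMultilinearMap.norm_image_diag_sub_le {𝕜 ι E G : Type*}
    [NontriviallyNormedField 𝕜] [SeminormedAddCommGroup E] [NormedSpace 𝕜 E]
    [SeminormedAddCommGroup G] [NormedSpace 𝕜 G] [Fintype ι] [Nonempty ι]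
    (f : ContinuousMultilinearMap 𝕜 (fun _ : ι => E) G) (x y : E) :
    ‖f (fun _ => x) - f (fun _ => y)‖ ≤
      ‖f‖ * Fintype.card ι * max ‖x‖ ‖y‖ ^ (Fintype.card ι - 1) * ‖x - y‖ := by
  have hsub : ‖(fun _ : ι => x) - fun _ => y‖ = ‖x - y‖ := pi_norm_const (x - y)
  simpa only [pi_norm_const, hsub] using f.norm_image_sub_le (fun _ => x) (fun _ => y)

namespace Real

theorem abs_rpow_sub_rpow_mul_rpow_le {p a b c : ℝ} (hp₀ : 0 ≤ p) (hp₁ : p ≤ 1)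
    (ha : 0 < a) (hb : 0 < b) (hc : 0 ≤ c) (hca : c ≤ max a b) :
    |a ^ p - b ^ p| * c ^ (1 - p) ≤ |a - b| := by
  wlog hba : b ≤ a generalizing a b
  · rw [abs_sub_comm, abs_sub_comm a]
    exact this hb ha (max_comm a b ▸ hca) (le_of_not_ge hba)
  have hpow : b ^ p ≤ a ^ p := rpow_le_rpow hb.le hba hp₀
  have hself : ∀ t : ℝ, 0 < t → t ^ p * t ^ (1 - p) = t := fun t ht => by
    rw [← rpow_add ht, add_sub_cancel, rpow_one]
  rw [max_eq_left hba] at hca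
  rw [abs_of_nonneg (sub_nonneg.2 hpow), abs_of_nonneg (sub_nonneg.2 hba)]
  calc (a ^ p - b ^ p) * c ^ (1 - p)
      ≤ (a ^ p - b ^ p) * a ^ (1 - p) := by gcongr
    _ = a - b ^ p * a ^ (1 - p) := by rw [sub_mul, hself a ha]
    _ ≤ a - b ^ p * b ^ (1 - p) := by gcongr
    _ = a - b := by rw [hself b hb]

theorem pow_pred_le_add_one_rpow_one_sub_one_div {m : ℝ} (hm : 0 ≤ m) {k : ℕ} (hk : 1 ≤ k) :
    m ^ (k - 1) ≤ (m ^ k + 1) ^ (1 - (1 : ℝ) / k) := by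
  have hk₀ : (k : ℝ) ≠ 0 := by positivity
  have hexp : 0 ≤ 1 - (1 : ℝ) / k := by
    rw [sub_nonneg, div_le_one (by positivity)]
    exact_mod_cast hk
  calc m ^ (k - 1) = (m ^ k) ^ (1 - (1 : ℝ) / k) := by
        rw [← rpow_natCast_mul hm, mul_one_sub, mul_one_div_cancel hk₀, ← rpow_natCast,
          Nat.cast_sub hk, Nat.cast_one]
    _ ≤ (m ^ k + 1) ^ (1 - (1 : ℝ) / k) := by gcongr; linarith

end Real

theorem abs_rpow_one_div_add_one_sub_le {X : Type*} [SeminormedAddCommGroup X] {f : X → ℝ}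
    {k : ℕ} (hk : 1 ≤ k) {C : ℝ} (hC : 0 ≤ C) (hlow : ∀ x, ‖x‖ ^ k ≤ f x)
    (hf : ∀ x y, |f x - f y| ≤ C * max ‖x‖ ‖y‖ ^ (k - 1) * ‖x - y‖) (x y : X) :
    |(f x + 1) ^ ((1 : ℝ) / k) - (f y + 1) ^ ((1 : ℝ) / k)| ≤ C * ‖x - y‖ := by
  set r := max ‖x‖ ‖y‖
  have hr : 0 ≤ r := le_max_of_le_left (norm_nonneg x)
  have hpos : ∀ z, 0 < f z + 1 := fun z => by
    linarith [hlow z, pow_nonneg (norm_nonneg z) k]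
  have hrk : r ^ k + 1 ≤ max (f x + 1) (f y + 1) := by
    rw [max_add_add_right, add_le_add_iff_right]
    rcases max_choice ‖x‖ ‖y‖ with h | h
    · exact (h ▸ hlow x).trans (le_max_left _ _)
    · exact (h ▸ hlow y).trans (le_max_right _ _)
  have hroot := Real.abs_rpow_sub_rpow_mul_rpow_le (p := 1 / k) (by positivity)
    (div_le_one_of_le₀ (by exact_mod_cast hk) (by positivity)) (hpos x) (hpos y)
    (by positivity) hrk
  refine le_of_mul_le_mul_right ?_ (by positivity : 0 < (r ^ k + 1) ^ (1 - (1 : ℝ) / k))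
  calc _ ≤ |f x - f y| := by simpa only [add_sub_add_right_eq_sub] using hroot
    _ ≤ C * r ^ (k - 1) * ‖x - y‖ := hf x y
    _ ≤ C * (r ^ k + 1) ^ (1 - (1 : ℝ) / k) * ‖x - y‖ := by
        gcongr
        exact Real.pow_pred_le_add_one_rpow_one_sub_one_div hr hk
    _ = _ := by ring

theorem Q_lipschitz_general
    {X : Type*} [NormedAddCommGroup X] [NormedSpace ℝ X]
    (n : ℕ) (hn : 1 ≤ n) (A : ℝ)
    (q : X → ℝ)
    (M : ContinuousMultilinearMap ℝ (fun _ : Fin (2 * n) => X) ℝ)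
    (hq : ∀ x : X, q x = M (fun _ => x))
    (hbound : ∀ x : X, ‖x‖ ^ (2 * n) ≤ q x ∧ q x ≤ A * ‖x‖ ^ (2 * n)) :
    ∃ L : ℝ, 0 < L ∧ ∀ x y : X,
      |((q x + 1) ^ ((1 : ℝ) / (2 * n)) - 1) - ((q y + 1) ^ ((1 : ℝ) / (2 * n)) - 1)|
        ≤ L * ‖x - y‖ := by
  have : Nonempty (Fin (2 * n)) := ⟨⟨0, by omega⟩⟩
  have hq_diff : ∀ x y, |q x - q y| ≤ ‖M‖ * (2 * n : ℕ) * max ‖x‖ ‖y‖ ^ (2 * n - 1) * ‖x - y‖ :=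
    fun x y => by
      simpa only [hq, Real.norm_eq_abs, Fintype.card_fin] using M.norm_image_diag_sub_le x y
  have hroot :=
    abs_rpow_one_div_add_one_sub_le (by omega) (by positivity) (fun x => (hbound x).1) hq_diff
  refine ⟨‖M‖ * (2 * n : ℕ) + 1, by positivity, fun x y => ?_⟩
  calc _ = |(q x + 1) ^ ((1 : ℝ) / (2 * n : ℕ)) - (q y + 1) ^ ((1 : ℝ) / (2 * n : ℕ))| := by
        push_cast; rw [sub_sub_sub_cancel_right]
    _ ≤ ‖M‖ * (2 * n : ℕ) * ‖x - y‖ := hroot x y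
    _ ≤ (‖M‖ * (2 * n : ℕ) + 1) * ‖x - y‖ := by gcongr; linarith

/-- If `q` is a continuous `2n`-homogeneous polynomial with
`‖x‖^(2n) ≤ q x ≤ A‖x‖^(2n)`, then `Q x = (q x + 1)^(1/(2n)) - 1` is Lipschitz. -/
theorem Q_lipschitz
    {X : Type*} [NormedAddCommGroup X] [NormedSpace ℝ X] [CompleteSpace X]
    (n : ℕ) (hn : 1 ≤ n) (A : ℝ) (hA : 1 < A)
    (q : X → ℝ)
    (M : ContinuousMultilinearMap ℝ (fun _ : Fin (2 * n) => X) ℝ)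
    (hq : ∀ x : X, q x = M (fun _ => x))
    (hbound : ∀ x : X, ‖x‖ ^ (2 * n) ≤ q x ∧ q x ≤ A * ‖x‖ ^ (2 * n)) :
    ∃ L : ℝ, 0 < L ∧ ∀ x y : X,
      |((q x + 1) ^ ((1 : ℝ) / (2 * n)) - 1) - ((q y + 1) ^ ((1 : ℝ) / (2 * n)) - 1)|
        ≤ L * ‖x - y‖ :=
  Q_lipschitz_general n hn A q M hq hbound
end

section
/- Let X be a real normed space and let x, y ∈ X. Then sup_{0 ≤ θ ≤ 2π} ‖(cos θ)·x − (sin θ)·y‖ = sup{√(T(x)² + T(y)²) : T ∈ X*, ‖T‖ ≤ 1}, where X* denotes the continuous dual of X. -/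
/-!
Both sides are the supremum of `T (cos θ • x - sin θ • y) = cos θ * T x - sin θ * T y` over
`θ` and `‖T‖ ≤ 1`: for fixed `θ` the supremum over `T` is the norm by Hahn–Banach, and for
fixed `T` the supremum over `θ` is `√(T x ^ 2 + T y ^ 2)` by Cauchy–Schwarz, with equality at
`θ = -arg (T x + T y * I)`.
-/

open Real Set

theorem cos_mul_sub_sin_mul_le_sqrt (θ a b : ℝ) : cos θ * a - sin θ * b ≤ √(a ^ 2 + b ^ 2) :=
  (le_abs_self _).trans <| abs_le_sqrt <| by
    nlinarith [sq_nonneg (sin θ * a + cos θ * b), sin_sq_add_cos_sq θ]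

theorem exists_cos_mul_sub_sin_mul_eq_sqrt (a b : ℝ) :
    ∃ θ ∈ Ico 0 (2 * π), cos θ * a - sin θ * b = √(a ^ 2 + b ^ 2) := by
  have hperiodic : Function.Periodic (fun θ ↦ cos θ * a - sin θ * b) (2 * π) := fun θ ↦ by
    simp only [cos_add_two_pi, sin_add_two_pi]
  set z : ℂ := ⟨a, b⟩
  obtain ⟨θ, hθ, hθeq⟩ := hperiodic.exists_mem_Ico₀ two_pi_pos (-z.arg)
  refine ⟨θ, hθ, ?_⟩
  have ha : a = ‖z‖ * cos z.arg := (Complex.norm_mul_cos_arg z).symm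
  have hb : b = ‖z‖ * sin z.arg := (Complex.norm_mul_sin_arg z).symm
  rw [← hθeq, ← Complex.norm_eq_sqrt_sq_add_sq z, cos_neg, sin_neg]
  linear_combination cos z.arg * ha + sin z.arg * hb + ‖z‖ * sin_sq_add_cos_sq z.arg

/-- The complexification norm formula: for `x, y` in a real normed space,
`sup_{0 ≤ θ ≤ 2π} ‖cos θ • x - sin θ • y‖ = sup {√(T x² + T y²) : T ∈ X*, ‖T‖ ≤ 1}`. -/
theorem complexification_norm_eq
    {X : Type*} [NormedAddCommGroup X] [NormedSpace ℝ X] (x y : X) :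
    sSup ((fun θ : ℝ => ‖Real.cos θ • x - Real.sin θ • y‖) '' Set.Icc 0 (2 * Real.pi)) =
    sSup ((fun T : X →L[ℝ] ℝ => Real.sqrt ((T x) ^ 2 + (T y) ^ 2)) '' {T | ‖T‖ ≤ 1}) := by
  have happly (T : X →L[ℝ] ℝ) (θ : ℝ) : T (cos θ • x - sin θ • y) = cos θ * T x - sin θ * T y := by
    simp only [map_sub, map_smul, smul_eq_mul]
  apply csSup_eq_csSup_of_forall_exists_le <;> simp only [forall_mem_image, exists_mem_image]
  · intro θ _
    obtain ⟨T, hT, hTv⟩ := exists_dual_vector'' ℝ (cos θ • x - sin θ • y)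
    refine ⟨T, hT, ?_⟩
    calc ‖cos θ • x - sin θ • y‖ = cos θ * T x - sin θ * T y := by rw [← happly, hTv]; rfl
      _ ≤ √(T x ^ 2 + T y ^ 2) := cos_mul_sub_sin_mul_le_sqrt θ _ _
  · intro T hT
    obtain ⟨θ, hθ, hθeq⟩ := exists_cos_mul_sub_sin_mul_eq_sqrt (T x) (T y)
    refine ⟨θ, Ico_subset_Icc_self hθ, ?_⟩
    calc √(T x ^ 2 + T y ^ 2) = T (cos θ • x - sin θ • y) := by rw [happly, hθeq]
      _ ≤ ‖T (cos θ • x - sin θ • y)‖ := le_abs_self _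
      _ ≤ 1 * ‖cos θ • x - sin θ • y‖ := T.le_of_opNorm_le hT _
      _ = ‖cos θ • x - sin θ • y‖ := one_mul _
end
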